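/- arXiv:1101.3820 — 3 statements merged into one kernel-verified Lean document; each statement's English description precedes it below -/
import Mathlib

section
/- Under Dantzig's most-negative-reduced-cost pivoting rule, if x^t and x^{t+1} are consecutive iterates of the simplex method on a standard-form LP with optimal value z*, and x^{t+1} ≠ x^t, then c^T x^{t+1} - z* ≤ (1 - δ/(mγ)) (c^T x^t - z*), where δ and γ are respectively the minimum and maximum of all positive components of basic feasible solutions. -/
open Matrix

/-- `e : Fin m → ν` selects a basis of the constraint matrix `A`:
it is injective and the corresponding square submatrix `A_B` is invertible. -/
def IsBasis {m : ℕ} {ν : Type*} [Fintype ν] (A : Matrix (Fin m) ν ℝ) (e : Fin m → ν) : Prop :=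
  Function.Injective e ∧ IsUnit (Matrix.of fun i k => A i (e k)).det

/-- `x` is a basic feasible solution of `A x = b, x ≥ 0`. -/
def IsBFS {m : ℕ} {ν : Type*} [Fintype ν] (A : Matrix (Fin m) ν ℝ) (b : Fin m → ℝ)
    (x : ν → ℝ) : Prop :=
  A.mulVec x = b ∧ 0 ≤ x ∧ ∃ e : Fin m → ν, IsBasis A e ∧ ∀ j, j ∉ Set.range e → x j = 0

/-- The set of all positive entries of basic feasible solutions. -/
def posEntries {m : ℕ} {ν : Type*} [Fintype ν] (A : Matrix (Fin m) ν ℝ) (b : Fin m → ℝ) :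
    Set ℝ :=
  {r | ∃ x j, IsBFS A b x ∧ x j = r ∧ 0 < r}

/-- The reduced cost of variable `j` with respect to basis `e`:
`c̄_j = c_j - A_j^T (A_B^{-1})^T c_B`. -/
noncomputable def reducedCost {m : ℕ} {ν : Type*} [Fintype ν] (A : Matrix (Fin m) ν ℝ)
    (c : ν → ℝ) (e : Fin m → ν) (j : ν) : ℝ :=
  c j - (fun i => A i j) ⬝ᵥ ((Matrix.of fun i k => A i (e k))⁻¹.transpose.mulVec fun k => c (e k))

/-- Under Dantzig's most-negative rule, a pivot that changes the iterate
reduces the optimality gap by a factor `1 - δ/(mγ)`. -/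
theorem geometric_gap_reduction {m n : ℕ}
    (A : Matrix (Fin m) (Fin n) ℝ) (b : Fin m → ℝ) (c : Fin n → ℝ)
    (hrank : A.rank = m)
    (δ γ : ℝ)
    (hδ : ∀ x, IsBFS A b x → ∀ j, x j ≠ 0 → δ ≤ x j)
    (hγ : ∀ x, IsBFS A b x → ∀ j, 0 < x j → x j ≤ γ)
    (xstar : Fin n → ℝ) (hxstar : IsBFS A b xstar)
    (hopt : ∀ x : Fin n → ℝ, A.mulVec x = b → 0 ≤ x → c ⬝ᵥ xstar ≤ c ⬝ᵥ x)
    (zstar : ℝ) (hz : zstar = c ⬝ᵥ xstar)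
    -- the current iterate `x^t` with basis `e`
    (xt : Fin n → ℝ) (e : Fin m → Fin n) (hbasis : IsBasis A e) (hxt : IsBFS A b xt)
    (hsupp : ∀ j, j ∉ Set.range e → xt j = 0)
    -- the entering index chosen by the most negative rule, with negative reduced cost
    (j : Fin n) (hjnb : j ∉ Set.range e)
    (hjmin : ∀ k, k ∉ Set.range e → reducedCost A c e j ≤ reducedCost A c e k)
    (hjneg : reducedCost A c e j < 0)
    (Δ : ℝ) (hΔ : Δ = -reducedCost A c e j)
    -- the next iterate produced by the pivot
    (xt1 : Fin n → ℝ) (hxt1 : IsBFS A b xt1)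
    (hdec : c ⬝ᵥ xt - c ⬝ᵥ xt1 = Δ * xt1 j)
    (hstay : xt1 j = 0 → xt1 = xt)
    (hne : xt1 ≠ xt) :
    c ⬝ᵥ xt1 - zstar ≤ (1 - δ / (m * γ)) * (c ⬝ᵥ xt - zstar) := by
  classical
  obtain ⟨heA, hxpos, -⟩ := hxt
  obtain ⟨he_inj, hBdet⟩ := hbasis
  set B : Matrix (Fin m) (Fin m) ℝ := Matrix.of (fun i k => A i (e k)) with hB
  set y : Fin m → ℝ := B⁻¹.transpose.mulVec (fun k => c (e k)) with hy
  have hrc : ∀ jj, reducedCost A c e jj = c jj - ∑ i, A i jj * y i := by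
    intro jj
    simp only [reducedCost, dotProduct, ← hB, ← hy]
  have hrc_basic : ∀ k, reducedCost A c e (e k) = 0 := by
    intro k
    have h2 : B.transpose.mulVec y = fun k => c (e k) := by
      rw [hy, Matrix.mulVec_mulVec, ← Matrix.transpose_mul, Matrix.nonsing_inv_mul B hBdet,
        Matrix.transpose_one, Matrix.one_mulVec]
    have h3 : ∑ i, A i (e k) * y i = c (e k) := by
      have h := congrFun h2 k
      simpa [Matrix.mulVec, dotProduct, hB, mul_comm] using h
    rw [hrc, h3, sub_self]
  have key : ∀ x : Fin n → ℝ, A.mulVec x = b →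
      ∑ jj, reducedCost A c e jj * x jj = c ⬝ᵥ x - y ⬝ᵥ b := by
    intro x hx
    have hbx : ∀ i, ∑ jj, A i jj * x jj = b i := by
      intro i
      have h := congrFun hx i
      simpa [Matrix.mulVec, dotProduct] using h
    calc ∑ jj, reducedCost A c e jj * x jj
        = ∑ jj, (c jj * x jj - ∑ i, A i jj * y i * x jj) := by
          apply Finset.sum_congr rfl
          intro jj _
          rw [hrc, sub_mul, Finset.sum_mul]
      _ = (∑ jj, c jj * x jj) - ∑ jj, ∑ i, A i jj * y i * x jj := by
          rw [Finset.sum_sub_distrib]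
      _ = c ⬝ᵥ x - ∑ i, y i * ∑ jj, A i jj * x jj := by
          rw [Finset.sum_comm]
          congr 1
          apply Finset.sum_congr rfl
          intro i _
          rw [Finset.mul_sum]
          apply Finset.sum_congr rfl
          intro jj _
          ring
      _ = c ⬝ᵥ x - y ⬝ᵥ b := by
          congr 1
          apply Finset.sum_congr rfl
          intro i _
          rw [hbx]
  have hxt_sum : ∑ jj, reducedCost A c e jj * xt jj = 0 := by
    apply Finset.sum_eq_zero
    intro jj _
    by_cases h : jj ∈ Set.range e
    · obtain ⟨k, rfl⟩ := h
      rw [hrc_basic]; ring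
    · rw [hsupp jj h]; ring
  have hyb : y ⬝ᵥ b = c ⬝ᵥ xt := by
    have h := key xt heA
    rw [hxt_sum] at h
    linarith
  have hΔpos : 0 < Δ := by rw [hΔ]; linarith
  have hxt1j : 0 < xt1 j := by
    rcases lt_or_eq_of_le (hxt1.2.1 j) with h | h
    · exact h
    · exact absurd (hstay h.symm) hne
  have hγpos : 0 < γ := lt_of_lt_of_le hxt1j (hγ xt1 hxt1 j hxt1j)
  have hδx : δ ≤ xt1 j := hδ xt1 hxt1 j (ne_of_gt hxt1j)
  have hγ_xs : ∀ jj, 0 < xstar jj → xstar jj ≤ γ := hγ xstar hxstar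
  obtain ⟨hAxs, hxsnn, e', ⟨he'_inj, -⟩, hxs_supp⟩ := hxstar
  have hsum_xs : ∑ jj, xstar jj ≤ m * γ := by
    have h0 : ∑ jj, xstar jj = ∑ jj ∈ Finset.univ.image e', xstar jj := by
      symm
      apply Finset.sum_subset (Finset.subset_univ _)
      intro jj _ hjj
      apply hxs_supp
      rintro ⟨k, rfl⟩
      exact hjj (Finset.mem_image.mpr ⟨k, Finset.mem_univ k, rfl⟩)
    have h1 : ∑ jj ∈ Finset.univ.image e', xstar jj = ∑ k : Fin m, xstar (e' k) :=
      Finset.sum_image (fun a _ b _ h => he'_inj h)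
    have h2 : ∀ k : Fin m, xstar (e' k) ≤ γ := by
      intro k
      rcases lt_or_eq_of_le (hxsnn (e' k)) with h | h
      · exact hγ_xs _ h
      · rw [← h]; exact le_of_lt hγpos
    calc ∑ jj, xstar jj = ∑ k : Fin m, xstar (e' k) := by rw [h0, h1]
      _ ≤ ∑ _k : Fin m, γ := Finset.sum_le_sum (fun k _ => h2 k)
      _ = m * γ := by simp [Finset.sum_const, nsmul_eq_mul]
  have hlow : -(Δ * (m * γ)) ≤ ∑ jj, reducedCost A c e jj * xstar jj := by
    have step : ∀ jj, -(Δ * xstar jj) ≤ reducedCost A c e jj * xstar jj := by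
      intro jj
      by_cases h : jj ∈ Set.range e
      · obtain ⟨k, rfl⟩ := h
        rw [hrc_basic]
        have h2 : (0:ℝ) ≤ xstar (e k) := hxsnn (e k)
        nlinarith
      · have h1 : -Δ ≤ reducedCost A c e jj := by
          rw [hΔ, neg_neg]; exact hjmin jj h
        have h2 : (0:ℝ) ≤ xstar jj := hxsnn jj
        nlinarith
    calc -(Δ * (m * γ)) ≤ -(Δ * ∑ jj, xstar jj) := by nlinarith
      _ = ∑ jj, -(Δ * xstar jj) := by rw [Finset.mul_sum, ← Finset.sum_neg_distrib]
      _ ≤ ∑ jj, reducedCost A c e jj * xstar jj := Finset.sum_le_sum (fun jj _ => step jj)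
  have hgap : c ⬝ᵥ xt - zstar ≤ Δ * (m * γ) := by
    have h1 := key xstar hAxs
    rw [hyb] at h1
    rw [hz]
    linarith
  have hg0 : zstar ≤ c ⬝ᵥ xt := hz ▸ hopt xt heA hxpos
  have hdec' : c ⬝ᵥ xt1 - zstar = (c ⬝ᵥ xt - zstar) - Δ * xt1 j := by linarith
  by_cases hcase : 0 ≤ δ ∧ 0 < (m : ℝ) * γ
  · obtain ⟨hδ0, hmγ⟩ := hcase
    rw [hdec']
    have hq : δ / ((m : ℝ) * γ) * ((m : ℝ) * γ) = δ := div_mul_cancel₀ δ (ne_of_gt hmγ)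
    nlinarith [mul_le_mul_of_nonneg_left hgap hδ0,
      mul_le_mul_of_nonneg_right hδx (le_of_lt hΔpos),
      mul_pos hΔpos hxt1j, hg0, hmγ,
      mul_le_mul_of_nonneg_right hgap (le_of_lt hmγ)]
  · have hq : δ / ((m : ℝ) * γ) ≤ 0 := by
      have hmγnn : (0:ℝ) ≤ (m : ℝ) * γ := by positivity
      rcases eq_or_lt_of_le hmγnn with h2 | h2
      · rw [← h2, div_zero]
      · have hδneg : δ < 0 := by
          by_contra hcon
          push_neg at hcon
          exact hcase ⟨hcon, h2⟩
        exact le_of_lt (div_neg_of_neg_of_pos hδneg h2)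
    rw [hdec']
    nlinarith [mul_pos hΔpos hxt1j, hg0,
      mul_nonneg (neg_nonneg.mpr hq) (sub_nonneg.mpr hg0)]
end

section
/- Let x^t be a non-optimal basic feasible solution of the primal LP with basis B^t, and let s* be an optimal dual slack vector. Then there exists an index j̄ ∈ B^t such that x^t_{j̄} > 0 and s*_{j̄} ≥ (c^T x^t - z*)/(m · x^t_{j̄}). -/
open Matrix

/-- If `x^t` is a non-optimal BFS with basis `B^t` and `s*` an optimal dual
slack vector, there is a basic index `j̄` with `x^t_{j̄} > 0` and
`s*_{j̄} ≥ (c^T x^t - z*)/(m x^t_{j̄})`. -/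
theorem exists_large_dual_slack {m n : ℕ}
    (A : Matrix (Fin m) (Fin n) ℝ) (b : Fin m → ℝ) (c : Fin n → ℝ)
    (hrank : A.rank = m)
    (zstar : ℝ)
    -- `(y*, s*)` is an optimal dual solution with value `z*`
    (ystar : Fin m → ℝ) (sstar : Fin n → ℝ)
    (hdualfeas : A.transpose.mulVec ystar + sstar = c) (hsnn : (0 : Fin n → ℝ) ≤ sstar)
    (hdualopt : b ⬝ᵥ ystar = zstar)
    (hzlb : ∀ x : Fin n → ℝ, A.mulVec x = b → 0 ≤ x → zstar ≤ c ⬝ᵥ x)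
    -- `x^t`: a non-optimal BFS with basis `e`
    (xt : Fin n → ℝ) (e : Fin m → Fin n) (hbasis : IsBasis A e)
    (hfeas : A.mulVec xt = b) (hnonneg : (0 : Fin n → ℝ) ≤ xt)
    (hsupp : ∀ j, j ∉ Set.range e → xt j = 0)
    (hnotopt : c ⬝ᵥ xt ≠ zstar) :
    ∃ j ∈ Set.range e, 0 < xt j ∧ sstar j ≥ (c ⬝ᵥ xt - zstar) / (m * xt j) := by
  set g : ℝ := c ⬝ᵥ xt - zstar with hg
  -- the gap equals sstar ⬝ᵥ xt
  have hgap : g = ∑ k : Fin m, sstar (e k) * xt (e k) := by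
    have h1 : g = sstar ⬝ᵥ xt := by
      have hz : zstar = ystar ⬝ᵥ (A.mulVec xt) := by
        rw [hfeas, ← hdualopt, dotProduct_comm]
      have hc : c ⬝ᵥ xt = (A.transpose.mulVec ystar) ⬝ᵥ xt + sstar ⬝ᵥ xt := by
        rw [← add_dotProduct, hdualfeas]
      have ht : (A.transpose.mulVec ystar) ⬝ᵥ xt = ystar ⬝ᵥ (A.mulVec xt) := by
        rw [Matrix.mulVec_transpose, Matrix.dotProduct_mulVec]
      rw [hg, hc, ht, hz]; ring
    have h2 : sstar ⬝ᵥ xt = ∑ j ∈ Finset.univ.image e, sstar j * xt j := by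
      rw [dotProduct]
      refine (Finset.sum_subset (Finset.subset_univ _) ?_).symm
      intro j _ hj
      have : j ∉ Set.range e := by
        intro ⟨k, hk⟩
        exact hj (Finset.mem_image.mpr ⟨k, Finset.mem_univ k, hk⟩)
      rw [hsupp j this, mul_zero]
    rw [h1, h2, Finset.sum_image (fun a _ b _ h => hbasis.1 h)]
  have hgpos : 0 < g := by
    have := hzlb xt hfeas hnonneg
    have : 0 ≤ g := by simpa [hg] using this
    cases this.lt_or_eq with
    | inl h => exact h
    | inr h => exact absurd (by linarith [hg]) hnotopt
  have hmpos : 0 < m := by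
    rcases Nat.eq_zero_or_pos m with h | h
    · exfalso; subst h; simp at hgap; linarith
    · exact h
  -- pigeonhole: some term ≥ g / m
  have hex : ∃ k : Fin m, g / m ≤ sstar (e k) * xt (e k) := by
    by_contra hno
    push_neg at hno
    have hsum : ∑ k : Fin m, sstar (e k) * xt (e k) <
        ∑ _k : Fin m, g / m := by
      apply Finset.sum_lt_sum_of_nonempty
      · exact Finset.univ_nonempty_iff.mpr ⟨⟨0, hmpos⟩⟩
      · intro k _; exact hno k
    rw [← hgap, Finset.sum_const, Finset.card_univ, Fintype.card_fin,
      nsmul_eq_mul] at hsum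
    have hm : (m : ℝ) ≠ 0 := Nat.cast_ne_zero.mpr hmpos.ne'
    rw [mul_div_cancel₀ _ hm] at hsum
    exact lt_irrefl _ hsum
  obtain ⟨k, hk⟩ := hex
  have hmR : (0 : ℝ) < m := Nat.cast_pos.mpr hmpos
  have hxpos : 0 < xt (e k) := by
    rcases (hnonneg (e k)).lt_or_eq with h | h
    · exact h
    · exfalso
      rw [← h, Pi.zero_apply, mul_zero] at hk
      have := div_pos hgpos hmR
      linarith
  refine ⟨e k, ⟨k, rfl⟩, hxpos, ?_⟩
  rw [ge_iff_le, div_le_iff₀ (by positivity)]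
  have hs : 0 ≤ sstar (e k) := hsnn (e k)
  calc g = m * (g / m) := by field_simp
    _ ≤ m * (sstar (e k) * xt (e k)) := by
        exact mul_le_mul_of_nonneg_left hk (le_of_lt hmR)
    _ = sstar (e k) * (m * xt (e k)) := by ring
end

section
/- Let s* be an optimal dual slack vector and let x^t be a non-optimal BFS with index j̄ satisfying s*_{j̄} ≥ (c^T x^t - z*)/(m x^t_{j̄}) and x^t_{j̄} > 0. Then for every primal feasible point x^k, x^k_{j̄} ≤ m x^t_{j̄} (c^T x^k - z*)/(c^T x^t - z*). -/
open Matrix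

/-- If `s*` is an optimal dual slack vector and `j̄` satisfies
`x^t_{j̄} > 0` and `s*_{j̄} ≥ (c^T x^t - z*)/(m x^t_{j̄})`, then every primal feasible point
`x^k` satisfies `x^k_{j̄} ≤ m x^t_{j̄} (c^T x^k - z*)/(c^T x^t - z*)`. -/
theorem slack_bound_on_component {m n : ℕ}
    (A : Matrix (Fin m) (Fin n) ℝ) (b : Fin m → ℝ) (c : Fin n → ℝ)
    (hrank : A.rank = m)
    (zstar : ℝ)
    (ystar : Fin m → ℝ) (sstar : Fin n → ℝ)
    (hdualfeas : A.transpose.mulVec ystar + sstar = c) (hsnn : (0 : Fin n → ℝ) ≤ sstar)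
    (hdualopt : b ⬝ᵥ ystar = zstar)
    -- the non-optimal BFS `x^t` and the index `j̄`
    (xt : Fin n → ℝ) (hxt : IsBFS A b xt) (hnotopt : c ⬝ᵥ xt ≠ zstar)
    (hzxt : zstar ≤ c ⬝ᵥ xt)
    (j : Fin n) (hj : 0 < xt j)
    (hs : sstar j ≥ (c ⬝ᵥ xt - zstar) / (m * xt j)) :
    ∀ xk : Fin n → ℝ, A.mulVec xk = b → 0 ≤ xk →
      xk j ≤ m * xt j * (c ⬝ᵥ xk - zstar) / (c ⬝ᵥ xt - zstar) := by
  intro xk hfeas hnn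
  -- m > 0
  have hm : 0 < (m : ℝ) := by
    rcases hxt with ⟨-, -, e, -, he⟩
    rcases Nat.eq_zero_or_pos m with hm0 | hm0
    · exfalso
      have : xt j = 0 := by
        apply he
        rintro ⟨i, -⟩
        subst hm0
        exact i.elim0
      linarith
    · exact_mod_cast hm0
  have hgap : 0 < c ⬝ᵥ xt - zstar := lt_of_le_of_ne (by linarith) (by
    intro h; exact hnotopt (by linarith))
  have hmx : 0 < (m : ℝ) * xt j := mul_pos hm hj
  -- duality gap identity for xk
  have hkey : c ⬝ᵥ xk - zstar = sstar ⬝ᵥ xk := by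
    have h1 : c ⬝ᵥ xk = (A.transpose.mulVec ystar + sstar) ⬝ᵥ xk := by rw [hdualfeas]
    rw [add_dotProduct, Matrix.mulVec_transpose, ← Matrix.dotProduct_mulVec, hfeas,
      dotProduct_comm ystar b, hdualopt] at h1
    linarith
  have hterm : xk j * sstar j ≤ sstar ⬝ᵥ xk := by
    rw [dotProduct, mul_comm]
    exact Finset.single_le_sum (f := fun i => sstar i * xk i)
      (fun i _ => mul_nonneg (hsnn i) (hnn i)) (Finset.mem_univ j)
  have hs' : (c ⬝ᵥ xt - zstar) ≤ sstar j * ((m : ℝ) * xt j) := by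
    rw [ge_iff_le, div_le_iff₀ hmx] at hs
    exact hs
  rw [le_div_iff₀ hgap]
  nlinarith [mul_le_mul_of_nonneg_left hs' (hnn j),
    mul_le_mul_of_nonneg_left hterm hmx.le, hnn j, hsnn j]
end
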